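/- Let x be a complex number with |x| > 432. Then ∑_{k=0}^∞ (C(3k,k)·C(6k,3k)/x^k)·(6H_{6k} − 3H_{3k} − 2H_{2k} + H_k) = log(x/(x−432)) · ∑_{k=0}^∞ C(3k,k)·C(6k,3k)/x^k, both series being convergent. -/

import Mathlib

/-- The `n`-th harmonic number `H_n = ∑_{i=1}^n 1/i`. -/
noncomputable def harm (n : ℕ) : ℝ := ∑ i ∈ Finset.range n, 1 / (i + 1 : ℝ)

/-!
Write `c_k = C(3k,k) C(6k,3k)` and `A_k = 6H_{6k} - 3H_{3k} - 2H_{2k} + H_k`. Then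
`(k+1)² c_{k+1} = 12(6k+1)(6k+5) c_k` and `A_{k+1} - A_k = 6/(6k+1) + 6/(6k+5)`, so `d_k = c_k A_k`
solves the inhomogeneous recurrence `(k+1)² d_{k+1} = 12(6k+1)(6k+5) d_k + 432(2k+1) c_k`.
The convolution `∑_{j=1}^n 432^j/j · c_{n-j}`, the `n`-th coefficient of
`-log(1 - 432z) · ∑ c_k z^k`, solves the same recurrence (a telescoping sum) with the same initial
value `0`. Hence the identity holds coefficientwise, and for `|x| > 432` it is the Cauchy product of
two absolutely convergent series, evaluated at `z = 1/x`.
-/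

open Finset Nat

section LogConvolution

variable {K : Type*} [Field K] [CharZero K]

/-- The `n`-th coefficient of `-log(1 - r z) · ∑ c_k z^k`; the summand with `p.1 = 0` vanishes
because `r ^ 0 / 0 = 0`. -/
def logConv (r : K) (c : ℕ → K) (n : ℕ) : K :=
  ∑ p ∈ antidiagonal n, r ^ p.1 / p.1 * c p.2

theorem logConv_eq_sum_range (r : K) (c : ℕ → K) (n : ℕ) :
    logConv r c n = ∑ i ∈ range n, r ^ (n - i) / (n - i : ℕ) * c i := by
  rw [logConv, ← Nat.sum_antidiagonal_swap, Nat.sum_antidiagonal_eq_sum_range_succ_mk,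
    sum_range_succ]
  simp

theorem logConv_succ {r t : K} {c : ℕ → K}
    (hc : ∀ k : ℕ, ((k : K) + 1) ^ 2 * c (k + 1) = (r * k * (k + 1) + t) * c k) (n : ℕ) :
    ((n : K) + 1) ^ 2 * logConv r c (n + 1) =
      (r * n * (n + 1) + t) * logConv r c n + r * (2 * n + 1) * c n := by
  -- `f (i + 1) - f i` is the `i`-th summand of the difference, since
  -- `r ((n+1)² - i²) / (n+1-i) = r (n + 1 + i) = (q n - q i) / (n - i)` for `q k = r k (k+1) + t`.
  set f : ℕ → K := fun i => -(r ^ (n + 1 - i) / (n + 1 - i : ℕ)) * ((i : K) ^ 2 * c i)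
  have hstep : ∀ i ∈ range n,
      ((n : K) + 1) ^ 2 * (r ^ (n + 1 - i) / (n + 1 - i : ℕ) * c i) =
        (r * n * (n + 1) + t) * (r ^ (n - i) / (n - i : ℕ) * c i) + (f (i + 1) - f i) := by
    intro i hi
    obtain ⟨j, rfl⟩ : ∃ j, n = i + j + 1 := ⟨n - i - 1, by grind⟩
    have hf₁ : f (i + 1) = -(r ^ (j + 1) / (j + 1 : ℕ)) * ((r * i * (i + 1) + t) * c i) := by
      simp only [f, show i + j + 1 + 1 - (i + 1) = j + 1 by omega, ← hc i, cast_add, cast_one]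
    have hf₀ : f i = -(r ^ (j + 2) / (j + 2 : ℕ)) * (i ^ 2 * c i) := by
      simp only [f, show i + j + 1 + 1 - i = j + 2 by omega]
    rw [hf₁, hf₀, show i + j + 1 + 1 - i = j + 2 by omega, show i + j + 1 - i = j + 1 by omega]
    have hj₁ : (j : K) + 1 ≠ 0 := Nat.cast_add_one_ne_zero j
    have hj₂ : (j : K) + 2 ≠ 0 := by exact_mod_cast (j + 1).succ_ne_zero
    push_cast
    field_simp
    ring
  have htelescope : ∑ i ∈ range n, (f (i + 1) - f i) = -r * n ^ 2 * c n := by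
    rw [sum_range_sub]
    simp only [f, add_tsub_cancel_left, tsub_zero, pow_one, cast_one, div_one, CharP.cast_eq_zero,
      zero_pow two_ne_zero, zero_mul, mul_zero, sub_zero]
    ring
  rw [logConv_eq_sum_range, logConv_eq_sum_range, sum_range_succ, mul_add, mul_sum,
    sum_congr rfl hstep, sum_add_distrib, ← mul_sum, htelescope]
  simp only [add_tsub_cancel_left, pow_one, cast_one, div_one]
  ring

theorem eq_logConv_of_recurrence {r t : K} {c d : ℕ → K}
    (hc : ∀ k : ℕ, ((k : K) + 1) ^ 2 * c (k + 1) = (r * k * (k + 1) + t) * c k) (hd₀ : d 0 = 0)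
    (hd : ∀ k : ℕ, ((k : K) + 1) ^ 2 * d (k + 1) =
      (r * k * (k + 1) + t) * d k + r * (2 * k + 1) * c k) :
    d = logConv r c := by
  funext n
  induction n with
  | zero => simp [hd₀, logConv]
  | succ n ih =>
    refine mul_left_cancel₀ (pow_ne_zero 2 (Nat.cast_add_one_ne_zero n)) ?_
    rw [hd, logConv_succ hc, ih]

end LogConvolution

namespace Complex

theorem log_div_sub_eq_neg_log_one_sub {r x : ℂ} (hrx : ‖r‖ < ‖x‖) :
    log (x / (x - r)) = -log (1 - r / x) := by
  have hx : x ≠ 0 := norm_pos_iff.mp ((norm_nonneg r).trans_lt hrx)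
  have hre : 0 < (1 - r / x).re := by
    have : (r / x).re < 1 := (re_le_norm _).trans_lt <| by
      rwa [norm_div, div_lt_one ((norm_nonneg r).trans_lt hrx)]
    simpa using this
  have harg : (1 - r / x).arg ≠ Real.pi := fun h => (arg_eq_pi_iff.mp h).1.not_gt hre
  rw [← log_inv _ harg, one_sub_div hx, inv_div]

theorem summable_norm_pow_div_natCast {z : ℂ} (hz : ‖z‖ < 1) :
    Summable fun k : ℕ => ‖z ^ k / k‖ := by
  refine (summable_geometric_of_lt_one (norm_nonneg z) hz).of_nonneg_of_le (fun _ => norm_nonneg _)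
    fun k => ?_
  rw [norm_div, norm_pow, norm_natCast]
  rcases k.eq_zero_or_pos with rfl | hk
  · simp
  · exact div_le_self (by positivity) (by exact_mod_cast hk)

theorem hasSum_logConv_div_pow {r x : ℂ} {c : ℕ → ℂ} (hrx : ‖r‖ < ‖x‖)
    (hc : Summable fun k => ‖c k / x ^ k‖) :
    HasSum (fun n => logConv r c n / x ^ n) (log (x / (x - r)) * ∑' k, c k / x ^ k) := by
  have hw : ‖r / x‖ < 1 := by rwa [norm_div, div_lt_one ((norm_nonneg r).trans_lt hrx)]
  have hlog : ∑' k : ℕ, (r / x) ^ k / k = log (x / (x - r)) := by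
    rw [(hasSum_taylorSeries_neg_log hw).tsum_eq, log_div_sub_eq_neg_log_one_sub hrx]
  have hterm (n : ℕ) : logConv r c n / x ^ n =
      ∑ p ∈ antidiagonal n, (r / x) ^ p.1 / p.1 * (c p.2 / x ^ p.2) := by
    rw [logConv, sum_div]
    refine sum_congr rfl fun p hp => ?_
    rw [← mem_antidiagonal.mp hp, pow_add, div_pow]
    ring
  rw [← hlog, tsum_mul_tsum_eq_tsum_sum_antidiagonal_of_summable_norm
    (summable_norm_pow_div_natCast hw) hc]
  simp_rw [hterm]
  exact (summable_norm_sum_mul_antidiagonal_of_summable_norm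
    (summable_norm_pow_div_natCast hw) hc).of_norm.hasSum

end Complex

noncomputable def binomProd (k : ℕ) : ℝ := ((3 * k).choose k : ℝ) * ((6 * k).choose (3 * k) : ℝ)

noncomputable def harmComb (k : ℕ) : ℝ :=
  6 * harm (6 * k) - 3 * harm (3 * k) - 2 * harm (2 * k) + harm k

theorem binomProd_mul_factorial (k : ℕ) :
    binomProd k * ((3 * k)! * (2 * k)! * k !) = (6 * k)! := by
  have h₁ := add_choose_mul_factorial_mul_factorial (3 * k) (3 * k)
  have h₂ := add_choose_mul_factorial_mul_factorial (2 * k) k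
  rw [show 3 * k + 3 * k = 6 * k by ring] at h₁
  rw [show 2 * k + k = 3 * k by ring] at h₂
  rw [binomProd]
  exact_mod_cast calc
    (3 * k).choose k * (6 * k).choose (3 * k) * ((3 * k)! * (2 * k)! * k !)
      = (6 * k).choose (3 * k) * (3 * k)! * ((3 * k).choose k * (2 * k)! * k !) := by ring
    _ = (6 * k)! := by rw [h₂, h₁]

theorem binomProd_succ (k : ℕ) :
    ((k : ℝ) + 1) ^ 2 * binomProd (k + 1) = (432 * k * (k + 1) + 60) * binomProd k := by
  have h₀ := binomProd_mul_factorial k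
  have h₁ := binomProd_mul_factorial (k + 1)
  simp only [Nat.mul_succ, factorial_succ, cast_mul, cast_add, cast_ofNat, cast_one] at h₁
  -- `(6k+6)! = 12 (6k+1)(6k+5) G (6k)!` and `(3k+3)! (2k+2)! (k+1)! = (k+1)² G (3k)! (2k)! k!`.
  set G : ℝ := 6 * (k + 1) * (3 * k + 1) * (3 * k + 2) * (2 * k + 1)
  refine mul_right_cancel₀ (by positivity : G * ((3 * k)! * (2 * k)! * k !) ≠ 0) ?_
  linear_combination h₁ - 12 * (6 * k + 1) * (6 * k + 5) * G * h₀

theorem binomProd_nonneg (k : ℕ) : 0 ≤ binomProd k := by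
  unfold binomProd; positivity

theorem binomProd_le_pow (k : ℕ) : binomProd k ≤ 432 ^ k := by
  induction k with
  | zero => simp [binomProd]
  | succ k ih =>
    refine le_of_mul_le_mul_left ?_ (by positivity : (0 : ℝ) < ((k : ℝ) + 1) ^ 2)
    calc ((k : ℝ) + 1) ^ 2 * binomProd (k + 1) = (432 * k * (k + 1) + 60) * binomProd k :=
          binomProd_succ k
      _ ≤ 432 * ((k : ℝ) + 1) ^ 2 * 432 ^ k :=
          mul_le_mul (by nlinarith) ih (binomProd_nonneg k) (by positivity)
      _ = ((k : ℝ) + 1) ^ 2 * 432 ^ (k + 1) := by ring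

theorem harm_succ (n : ℕ) : harm (n + 1) = harm n + 1 / (n + 1) := sum_range_succ _ n

theorem harmComb_succ (k : ℕ) :
    harmComb (k + 1) = harmComb k + 6 / (6 * k + 1) + 6 / (6 * k + 5) := by
  simp only [harmComb, Nat.mul_succ, harm_succ, cast_add, cast_mul, cast_ofNat, cast_one]
  field_simp
  ring

theorem binomProd_mul_harmComb_succ (k : ℕ) :
    ((k : ℝ) + 1) ^ 2 * (binomProd (k + 1) * harmComb (k + 1)) =
      (432 * k * (k + 1) + 60) * (binomProd k * harmComb k) + 432 * (2 * k + 1) * binomProd k := by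
  rw [harmComb_succ, ← mul_assoc, binomProd_succ]
  field_simp
  ring

theorem summable_norm_binomProd_div_pow {x : ℂ} (hx : 432 < ‖x‖) :
    Summable fun k => ‖(binomProd k : ℂ) / x ^ k‖ := by
  refine (summable_geometric_of_lt_one (by positivity) ((div_lt_one (by linarith)).mpr hx))
    |>.of_nonneg_of_le (fun _ => norm_nonneg _) fun k => ?_
  rw [norm_div, norm_pow, Complex.norm_real, Real.norm_of_nonneg (binomProd_nonneg k), div_pow]
  gcongr
  exact binomProd_le_pow k

theorem stmt_11 (x : ℂ) (hx : ‖x‖ > 432) :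
    Summable (fun k : ℕ => (((Nat.choose (3 * k) k : ℝ) * (Nat.choose (6 * k) (3 * k) : ℝ) : ℝ) : ℂ) / x ^ k * ((6 * harm (6 * k) - 3 * harm (3 * k) - 2 * harm (2 * k) + harm k : ℝ) : ℂ)) ∧
    Summable (fun k : ℕ => (((Nat.choose (3 * k) k : ℝ) * (Nat.choose (6 * k) (3 * k) : ℝ) : ℝ) : ℂ) / x ^ k) ∧
    ∑' k : ℕ, (((Nat.choose (3 * k) k : ℝ) * (Nat.choose (6 * k) (3 * k) : ℝ) : ℝ) : ℂ) / x ^ k * ((6 * harm (6 * k) - 3 * harm (3 * k) - 2 * harm (2 * k) + harm k : ℝ) : ℂ) =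
      Complex.log (x / (x - 432)) * ∑' k : ℕ, (((Nat.choose (3 * k) k : ℝ) * (Nat.choose (6 * k) (3 * k) : ℝ) : ℝ) : ℂ) / x ^ k := by
  have hc := summable_norm_binomProd_div_pow hx
  have hd : (fun k => ((binomProd k * harmComb k : ℝ) : ℂ)) =
      logConv 432 fun k => (binomProd k : ℂ) :=
    eq_logConv_of_recurrence (t := 60) (fun k => by exact_mod_cast binomProd_succ k)
      (by simp [harmComb, harm]) (fun k => by exact_mod_cast binomProd_mul_harmComb_succ k)
  have h := Complex.hasSum_logConv_div_pow (r := 432) (by simpa using hx) hc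
  simp only [← hd, Complex.ofReal_mul, mul_div_right_comm] at h
  exact ⟨h.summable, hc.of_norm, h.tsum_eq⟩
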